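/- Let M ≥ 1, ξ > 0, and ŷ_1,…,ŷ_M, y_1,…,y_M nonnegative reals with W_m = e^{-ξŷ_m}/∑_j e^{-ξŷ_j}. Then for any k, e^{-ξ ŷ_k − ξ y_k} ≤ ∑_{m=1}^M e^{-ξŷ_m}e^{-ξ y_m} ≤ M · exp( −ξ·(1/M)∑_j ŷ_j + ξ²·(1/M)∑_j ŷ_j² − ξ ∑_m W_m y_m + ξ² ∑_m W_m y_m² ). -/
import Mathlib

lemma exp_neg_le_quad {x : ℝ} (hx : 0 ≤ x) : Real.exp (-x) ≤ 1 - x + x ^ 2 := by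
  have hx1 : (0:ℝ) < Real.exp x := Real.exp_pos x
  have hpos : (0:ℝ) < 1 - x + x ^ 2 := by nlinarith [sq_nonneg (x - 1)]
  have key : 1 ≤ (1 - x + x ^ 2) * Real.exp x := by
    have h := mul_le_mul_of_nonneg_left (Real.add_one_le_exp x) hpos.le
    nlinarith [pow_nonneg hx 3]
  calc Real.exp (-x) = 1 / Real.exp x := by rw [Real.exp_neg, one_div]
    _ ≤ 1 - x + x ^ 2 := by rw [div_le_iff₀ hx1]; linarith

theorem chained_potential_bound (M : ℕ) (hM : 1 ≤ M) (ξ : ℝ) (hξ : 0 < ξ)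
    (yhat y : Fin M → ℝ) (hyhat : ∀ m, 0 ≤ yhat m) (hy : ∀ m, 0 ≤ y m)
    (W : Fin M → ℝ)
    (hW : ∀ m, W m = Real.exp (-ξ * yhat m) / ∑ j, Real.exp (-ξ * yhat j))
    (k : Fin M) :
    Real.exp (-ξ * yhat k - ξ * y k) ≤ ∑ m, Real.exp (-ξ * yhat m) * Real.exp (-ξ * y m) ∧
    ∑ m, Real.exp (-ξ * yhat m) * Real.exp (-ξ * y m) ≤
      M * Real.exp (-ξ * ((1 / M) * ∑ j, yhat j) + ξ ^ 2 * ((1 / M) * ∑ j, yhat j ^ 2)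
        - ξ * ∑ m, W m * y m + ξ ^ 2 * ∑ m, W m * y m ^ 2) := by
  have hMpos : (0:ℝ) < (M : ℝ) := by exact_mod_cast hM
  set S := ∑ j, Real.exp (-ξ * yhat j) with hSdef
  have hne : (Finset.univ : Finset (Fin M)).Nonempty := ⟨k, Finset.mem_univ k⟩
  have hSpos : 0 < S := Finset.sum_pos (fun j _ => Real.exp_pos _) hne
  constructor
  · have heq : -ξ * yhat k - ξ * y k = (-ξ * yhat k) + (-ξ * y k) := by ring
    rw [heq, Real.exp_add]
    exact Finset.single_le_sum (f := fun m => Real.exp (-ξ * yhat m) * Real.exp (-ξ * y m))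
      (fun m _ => by positivity) (Finset.mem_univ k)
  · have hWnn : ∀ m, 0 ≤ W m := fun m => by
      rw [hW m]; positivity
    have hWsum : ∑ m, W m = 1 := by
      simp only [hW]
      rw [← Finset.sum_div, div_self (ne_of_gt hSpos)]
    set u : ℝ := -ξ * ((1 / M) * ∑ j, yhat j) + ξ ^ 2 * ((1 / M) * ∑ j, yhat j ^ 2) with hu
    set v : ℝ := -ξ * ∑ m, W m * y m + ξ ^ 2 * ∑ m, W m * y m ^ 2 with hv
    have hrw : ∑ m, Real.exp (-ξ * yhat m) * Real.exp (-ξ * y m)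
        = S * ∑ m, W m * Real.exp (-ξ * y m) := by
      rw [Finset.mul_sum]
      apply Finset.sum_congr rfl
      intro m _
      rw [hW m]
      field_simp
    -- step A
    have hA : ∑ m, W m * Real.exp (-ξ * y m) ≤ Real.exp v := by
      have h1 : ∑ m, W m * Real.exp (-ξ * y m)
          ≤ ∑ m, W m * (1 - ξ * y m + (ξ * y m) ^ 2) := by
        apply Finset.sum_le_sum
        intro m _
        refine mul_le_mul_of_nonneg_left ?_ (hWnn m)
        have := exp_neg_le_quad (x := ξ * y m) (mul_nonneg hξ.le (hy m))
        rw [neg_mul]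
        exact this
      have h2 : ∑ m, W m * (1 - ξ * y m + (ξ * y m) ^ 2)
          = ∑ m, (W m + (-ξ) * (W m * y m) + ξ ^ 2 * (W m * y m ^ 2)) :=
        Finset.sum_congr rfl (fun m _ => by ring)
      have h3 : ∑ m, (W m + (-ξ) * (W m * y m) + ξ ^ 2 * (W m * y m ^ 2))
          = 1 + v := by
        rw [Finset.sum_add_distrib, Finset.sum_add_distrib, ← Finset.mul_sum,
          ← Finset.mul_sum, hWsum, hv]
        ring
      calc ∑ m, W m * Real.exp (-ξ * y m)
          ≤ ∑ m, W m * (1 - ξ * y m + (ξ * y m) ^ 2) := h1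
        _ = 1 + v := by rw [h2, h3]
        _ ≤ Real.exp v := by linarith [Real.add_one_le_exp v]
    -- step B
    have hB : S ≤ M * Real.exp u := by
      have h1 : S ≤ ∑ j, (1 + (-ξ) * yhat j + ξ ^ 2 * yhat j ^ 2) := by
        apply Finset.sum_le_sum
        intro j _
        have := exp_neg_le_quad (x := ξ * yhat j) (mul_nonneg hξ.le (hyhat j))
        calc Real.exp (-ξ * yhat j) ≤ 1 - ξ * yhat j + (ξ * yhat j) ^ 2 := by
              rw [neg_mul]; exact this
          _ = 1 + (-ξ) * yhat j + ξ ^ 2 * yhat j ^ 2 := by ring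
      have h2 : ∑ j, (1 + (-ξ) * yhat j + ξ ^ 2 * yhat j ^ 2)
          = (M : ℝ) + (-ξ) * ∑ j, yhat j + ξ ^ 2 * ∑ j, yhat j ^ 2 := by
        rw [Finset.sum_add_distrib, Finset.sum_add_distrib, ← Finset.mul_sum,
          ← Finset.mul_sum]
        simp
      have h3 : (M : ℝ) + (-ξ) * ∑ j, yhat j + ξ ^ 2 * ∑ j, yhat j ^ 2
          = (M : ℝ) * (1 + u) := by
        rw [hu]
        field_simp
        ring
      have h5 : (M : ℝ) * (1 + u) ≤ (M : ℝ) * Real.exp u :=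
        mul_le_mul_of_nonneg_left (by linarith [Real.add_one_le_exp u]) hMpos.le
      calc S ≤ ∑ j, (1 + (-ξ) * yhat j + ξ ^ 2 * yhat j ^ 2) := h1
        _ = (M : ℝ) * (1 + u) := by rw [h2, h3]
        _ ≤ (M : ℝ) * Real.exp u := h5
    have hAnn : 0 ≤ ∑ m, W m * Real.exp (-ξ * y m) :=
      Finset.sum_nonneg fun m _ => mul_nonneg (hWnn m) (Real.exp_pos _).le
    have hfinal : ∑ m, Real.exp (-ξ * yhat m) * Real.exp (-ξ * y m)
        ≤ (M : ℝ) * Real.exp u * Real.exp v := by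
      rw [hrw]
      exact mul_le_mul hB hA hAnn (by positivity)
    have hexp : u - ξ * ∑ m, W m * y m + ξ ^ 2 * ∑ m, W m * y m ^ 2 = u + v := by
      rw [hv]; ring
    calc ∑ m, Real.exp (-ξ * yhat m) * Real.exp (-ξ * y m)
        ≤ (M : ℝ) * Real.exp u * Real.exp v := hfinal
      _ = (M : ℝ) * Real.exp (u + v) := by rw [Real.exp_add u v, mul_assoc]
      _ = _ := by rw [hexp]
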